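/- The union of two arbitrary propositional Horn theories can be represented via composition using a disjoint copy of the alphabet: for all theories P and R whose atoms lie in the left copy of the alphabet A ⊕ A, P ∪ R = cl_{head(R)}(P[A←A']) ∘ cl_{body(P[A←A'])}(R) ∘ cl_A([A'←A]), where all compositions and closures are taken over the full alphabet A ⊕ A. -/
import Mathlib


/-- A propositional Horn theory over atoms `A`: a finite set of rules `(head, body)`. -/
abbrev Theory (A : Type*) := Finset (A × Finset A)

variable {A : Type*} [Fintype A] [DecidableEq A]

/-- Heads of a (sub)theory. -/
def heads (S : Theory A) : Finset A := S.image Prod.fst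

/-- Body atoms of a (sub)theory. -/
def bodies (S : Theory A) : Finset A := S.biUnion Prod.snd

/-- Sequential composition of propositional Horn theories. -/
def comp (P R : Theory A) : Theory A :=
  P.biUnion fun r =>
    (R.powerset.filter fun S => S.card = r.2.card ∧ heads S = r.2).image
      fun S => (r.1, bodies S)

/-- The unit theory `1_A = {a ← a | a ∈ A}`. -/
def unitTheory (A : Type*) [Fintype A] [DecidableEq A] : Theory A :=
  Finset.univ.image fun a => (a, ({a} : Finset A))

/-- The theory associated with an interpretation `I ⊆ A`. -/
def interp (I : Finset A) : Theory A := I.image fun a => (a, (∅ : Finset A))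

/-- The van Emden–Kowalski operator. -/
def vek (P : Theory A) (I : Finset A) : Finset A :=
  (P.filter fun r => r.2 ⊆ I).image Prod.fst

/-- The facts (rules with empty body) of a theory. -/
def facts (P : Theory A) : Theory A := P.filter fun r => r.2 = ∅

/-- The proper rules (rules with nonempty body) of a theory. -/
def proper (P : Theory A) : Theory A := P.filter fun r => r.2 ≠ ∅

/-- The left reduct `^I P`. -/
def leftReduct (I : Finset A) (P : Theory A) : Theory A := P.filter fun r => r.1 ∈ I

/-- The right reduct `P^I`. -/
def rightReduct (P : Theory A) (I : Finset A) : Theory A := P.filter fun r => r.2 ⊆ I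

/-- The restricted unit theory `1^I = {a ← a | a ∈ I}`. -/
def unitOn (I : Finset A) : Theory A := I.image fun a => (a, ({a} : Finset A))

/-- The closure `cl_B(P) = {b ← b | b ∈ B} ∪ P`. -/
def cl (B : Finset A) (P : Theory A) : Theory A :=
  (B.image fun b => (b, ({b} : Finset A))) ∪ P

/-- Replace every body atom of a theory over the left copy of the alphabet by
its primed (right-copy) counterpart: `P[A ← A']`. -/
def primeBodies (P : Theory (A ⊕ A)) : Theory (A ⊕ A) :=
  P.image fun r => (r.1, r.2.image (Sum.elim Sum.inr Sum.inr))

/-- The theory `[A' ← A] = {a' ← a | a ∈ A}`. -/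
def unprime (A : Type*) [Fintype A] [DecidableEq A] : Theory (A ⊕ A) :=
  Finset.univ.image fun a : A => (Sum.inr a, ({Sum.inl a} : Finset (A ⊕ A)))

/-- The set of left-copy atoms in `A ⊕ A`. -/
def leftAtoms (A : Type*) [Fintype A] [DecidableEq A] : Finset (A ⊕ A) :=
  Finset.univ.image Sum.inl

/-! ### Auxiliary lemmas -/

lemma mem_comp {P R : Theory A} {x : A × Finset A} :
    x ∈ comp P R ↔
      ∃ r ∈ P, ∃ S, S ⊆ R ∧ S.card = r.2.card ∧ heads S = r.2 ∧ x = (r.1, bodies S) := by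
  simp only [comp, Finset.mem_biUnion, Finset.mem_image, Finset.mem_filter,
    Finset.mem_powerset]
  constructor
  · rintro ⟨r, hr, S, ⟨hS, hc, hh⟩, rfl⟩
    exact ⟨r, hr, S, hS, hc, hh, rfl⟩
  · rintro ⟨r, hr, S, hS, hc, hh, rfl⟩
    exact ⟨r, hr, S, ⟨hS, hc, hh⟩, rfl⟩

lemma mem_cl {B : Finset A} {P : Theory A} {x : A × Finset A} :
    x ∈ cl B P ↔ (x.1 ∈ B ∧ x.2 = {x.1}) ∨ x ∈ P := by
  simp only [cl, Finset.mem_union, Finset.mem_image]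
  constructor
  · rintro (⟨b, hb, rfl⟩ | h)
    · exact Or.inl ⟨hb, rfl⟩
    · exact Or.inr h
  · rintro (⟨hb, h2⟩ | h)
    · exact Or.inl ⟨x.1, hb, by rw [← h2]⟩
    · exact Or.inr h

lemma not_isLeft_isRight {b : A ⊕ A} (h1 : b.isLeft = true) (h2 : b.isRight = true) :
    False := by cases b <;> simp_all

lemma mem_heads {S : Theory A} {r : A × Finset A} (h : r ∈ S) : r.1 ∈ heads S :=
  Finset.mem_image_of_mem _ h

lemma heads_singleton (s : A × Finset A) : heads {s} = {s.1} := by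
  simp [heads]

lemma bodies_singleton (s : A × Finset A) : bodies {s} = s.2 := by
  simp [bodies]

lemma heads_image_pair (T : Finset A) (f : A → Finset A) :
    heads (T.image fun b => (b, f b)) = T := by
  rw [heads, Finset.image_image]
  exact Finset.image_id

lemma card_image_pair (T : Finset A) (f : A → Finset A) :
    (T.image fun b => (b, f b)).card = T.card :=
  Finset.card_image_of_injective _ fun a b h => congrArg Prod.fst h

lemma bodies_image_pair (T : Finset A) (f : A → Finset A) :
    bodies (T.image fun b => (b, f b)) = T.biUnion f := by
  rw [bodies, Finset.image_biUnion]

/-- Membership in `cl (leftAtoms A) (unprime A)`: every atom `t` has exactly one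
rule, namely `(t, {unprimed t})`. -/
lemma mem_clU {x : (A ⊕ A) × Finset (A ⊕ A)} :
    x ∈ cl (leftAtoms A) (unprime A) ↔ x.2 = {Sum.elim Sum.inl Sum.inl x.1} := by
  obtain ⟨x1, x2⟩ := x
  rw [mem_cl]
  simp only [leftAtoms, unprime, Finset.mem_image, Finset.mem_univ, true_and]
  constructor
  · rintro (⟨⟨a, ha⟩, h2⟩ | ⟨a, ha⟩)
    · subst ha; simpa using h2
    · injection ha with h1 h2
      subst h1; subst h2; simp
  · intro h
    rcases x1 with a | a
    · exact Or.inl ⟨⟨a, rfl⟩, by simpa using h⟩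
    · exact Or.inr ⟨a, by rw [h]; rfl⟩

/-- Composing with `cl (leftAtoms A) (unprime A)` on the right unprimes all bodies. -/
lemma comp_clU (Q : Theory (A ⊕ A)) :
    comp Q (cl (leftAtoms A) (unprime A)) =
      Q.image fun r => (r.1, r.2.image (Sum.elim Sum.inl Sum.inl)) := by
  ext x
  rw [mem_comp, Finset.mem_image]
  constructor
  · rintro ⟨r, hr, S, hSU, hcard, hheads, rfl⟩
    refine ⟨r, hr, ?_⟩
    have hS : S = r.2.image fun t =>
        (t, ({Sum.elim Sum.inl Sum.inl t} : Finset (A ⊕ A))) := by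
      apply Finset.eq_of_subset_of_card_le
      · intro s hs
        have h1 : s.1 ∈ r.2 := by
          rw [← hheads]; exact Finset.mem_image_of_mem _ hs
        have h2 := mem_clU.mp (hSU hs)
        exact Finset.mem_image.mpr ⟨s.1, h1, by rw [← h2]⟩
      · rw [card_image_pair, ← hcard]
    rw [hS, bodies_image_pair, Finset.biUnion_singleton]
  · rintro ⟨r, hr, rfl⟩
    refine ⟨r, hr, r.2.image fun t =>
      (t, ({Sum.elim Sum.inl Sum.inl t} : Finset (A ⊕ A))), ?_, ?_, ?_, ?_⟩
    · intro s hs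
      rcases Finset.mem_image.mp hs with ⟨t, _, rfl⟩
      exact mem_clU.mpr rfl
    · exact card_image_pair _ _
    · exact heads_image_pair _ _
    · rw [bodies_image_pair, Finset.biUnion_singleton]

lemma bodies_primeBodies_isRight (P : Theory (A ⊕ A)) :
    ∀ b ∈ bodies (primeBodies P), b.isRight := by
  intro b hb
  simp only [bodies, primeBodies, Finset.mem_biUnion, Finset.mem_image] at hb
  rcases hb with ⟨r, ⟨p, _, rfl⟩, hb⟩
  rcases Finset.mem_image.mp hb with ⟨c, _, rfl⟩
  rcases c with a | a <;> simp

lemma body_primeBodies_isRight {P : Theory (A ⊕ A)} {r : (A ⊕ A) × Finset (A ⊕ A)}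
    (hr : r ∈ primeBodies P) : ∀ b ∈ r.2, b.isRight := by
  rcases Finset.mem_image.mp hr with ⟨p, _, rfl⟩
  intro b hb
  rcases Finset.mem_image.mp hb with ⟨c, _, rfl⟩
  rcases c with a | a <;> simp

/-- The middle composition yields `R ∪ primeBodies P`. -/
lemma mid_eq (P R : Theory (A ⊕ A))
    (hR : ∀ r ∈ R, r.1.isLeft ∧ ∀ b ∈ r.2, b.isLeft = true) :
    comp (cl (heads R) (primeBodies P)) (cl (bodies (primeBodies P)) R) =
      R ∪ primeBodies P := by
  ext x
  rw [mem_comp, Finset.mem_union]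
  constructor
  · rintro ⟨r, hr, S, hSU, hcard, hheads, rfl⟩
    rcases mem_cl.mp hr with ⟨hr1, hr2⟩ | hrP
    · -- r = (h, {h}) with h ∈ heads R
      rw [hr2] at hcard hheads
      rw [Finset.card_singleton] at hcard
      rcases Finset.card_eq_one.mp hcard with ⟨s, rfl⟩
      rw [heads_singleton, Finset.singleton_inj] at hheads
      rcases mem_cl.mp (hSU (Finset.mem_singleton_self s)) with ⟨hs1, _⟩ | hsR
      · -- impossible: s.1 ∈ bodies (primeBodies P) is right, but r.1 is left
        exfalso
        have hright := bodies_primeBodies_isRight P s.1 hs1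
        rcases Finset.mem_image.mp hr1 with ⟨t, htR, ht⟩
        have hleft := (hR t htR).1
        rw [ht] at hleft
        rw [hheads] at hright
        exact not_isLeft_isRight hleft hright
      · left
        rw [bodies_singleton, ← hheads]
        exact hsR
    · -- r ∈ primeBodies P
      right
      have hrbody := body_primeBodies_isRight hrP
      have hS : S = r.2.image fun b => (b, ({b} : Finset (A ⊕ A))) := by
        apply Finset.eq_of_subset_of_card_le
        · intro s hs
          have h1 : s.1 ∈ r.2 := by
            rw [← hheads]; exact Finset.mem_image_of_mem _ hs
          rcases mem_cl.mp (hSU hs) with ⟨_, h2⟩ | hsR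
          · exact Finset.mem_image.mpr ⟨s.1, h1, by rw [← h2]⟩
          · exact absurd (hrbody s.1 h1) (by
              have hleft := (hR s hsR).1
              cases hs1 : s.1 <;> simp_all)
        · rw [card_image_pair, ← hcard]
      rw [hS, bodies_image_pair]
      have : r.2.biUnion (fun b => ({b} : Finset (A ⊕ A))) = r.2 :=
        Finset.biUnion_singleton_eq_self
      rw [this]
      exact hrP
  · rintro (hxR | hxP)
    · refine ⟨(x.1, {x.1}), ?_, {x}, ?_, ?_, ?_, ?_⟩
      · exact mem_cl.mpr (Or.inl ⟨mem_heads (r := x) hxR, rfl⟩)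
      · intro s hs
        rw [Finset.mem_singleton] at hs
        exact mem_cl.mpr (Or.inr (hs ▸ hxR))
      · simp
      · rw [heads_singleton]
      · rw [bodies_singleton]
    · refine ⟨x, mem_cl.mpr (Or.inr hxP),
        x.2.image fun b => (b, ({b} : Finset (A ⊕ A))), ?_, ?_, ?_, ?_⟩
      · intro s hs
        rcases Finset.mem_image.mp hs with ⟨b, hb, rfl⟩
        refine mem_cl.mpr (Or.inl ⟨?_, rfl⟩)
        exact Finset.mem_biUnion.mpr ⟨x, hxP, hb⟩
      · exact card_image_pair _ _
      · exact heads_image_pair _ _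
      · rw [bodies_image_pair, Finset.biUnion_singleton_eq_self]

/-- The union of two arbitrary propositional Horn theories over the left copy
of the alphabet can be represented via composition using a disjoint copy:
`P ∪ R = cl_{head(R)}(P[A←A']) ∘ cl_{body(P[A←A'])}(R) ∘ cl_A([A'←A])`. -/
theorem union_eq_comp_with_copy (P R : Theory (A ⊕ A))
    (hP : ∀ r ∈ P, r.1.isLeft ∧ ∀ b ∈ r.2, b.isLeft = true)
    (hR : ∀ r ∈ R, r.1.isLeft ∧ ∀ b ∈ r.2, b.isLeft = true) :
    P ∪ R =
      comp
        (comp (cl (heads R) (primeBodies P)) (cl (bodies (primeBodies P)) R))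
        (cl (leftAtoms A) (unprime A)) := by
  rw [mid_eq P R hR, comp_clU, Finset.image_union]
  have hRid : (R.image fun r => (r.1, r.2.image (Sum.elim Sum.inl Sum.inl))) = R := by
    calc R.image (fun r => (r.1, r.2.image (Sum.elim Sum.inl Sum.inl)))
        = R.image id := by
          apply Finset.image_congr
          intro r hr
          have hb := (hR r hr).2
          simp only [id]
          rw [Prod.ext_iff]
          refine ⟨rfl, ?_⟩
          calc r.2.image (Sum.elim Sum.inl Sum.inl) = r.2.image id := by
                apply Finset.image_congr
                intro b hb'
                rcases b with a | a
                · rfl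
                · exact absurd (hb _ hb') (by simp)
            _ = r.2 := Finset.image_id
      _ = R := Finset.image_id
  have hPid : ((primeBodies P).image fun r =>
      (r.1, r.2.image (Sum.elim Sum.inl Sum.inl))) = P := by
    rw [primeBodies, Finset.image_image]
    calc P.image ((fun r : (A ⊕ A) × Finset (A ⊕ A) =>
          (r.1, r.2.image (Sum.elim Sum.inl Sum.inl))) ∘
          (fun r => (r.1, r.2.image (Sum.elim Sum.inr Sum.inr))))
        = P.image id := by
          apply Finset.image_congr
          intro p hp
          have hb := (hP p hp).2
          simp only [Function.comp, id, Finset.image_image]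
          rw [Prod.ext_iff]
          refine ⟨rfl, ?_⟩
          calc p.2.image ((Sum.elim Sum.inl Sum.inl) ∘ (Sum.elim Sum.inr Sum.inr))
              = p.2.image id := by
                apply Finset.image_congr
                intro b hb'
                rcases b with a | a
                · rfl
                · exact absurd (hb _ hb') (by simp)
            _ = p.2 := Finset.image_id
      _ = P := Finset.image_id
  rw [hRid, hPid, Finset.union_comm]
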